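/- Let T be a flipping Z₂-graph (a graph with an involution α : T → T that is a graph homomorphism, such that (x, α(x)) ∈ E(T) for some vertex x), and let G be a simple graph (no loops). Then the induced Z₂-action on the poset Hom(T, G), given by η ↦ η ∘ α, is free: no multi-homomorphism η satisfies η ∘ α = η. -/

import Mathlib

/-- A graph: a symmetric relation on a vertex type (loops allowed). -/
structure SymmGraph (V : Type*) where
  adj : V → V → Prop
  symm : ∀ {x y : V}, adj x y → adj y x

variable {V W U : Type*}

/-- `f` is a graph homomorphism from `G` to `H`. -/
def IsGraphHom (G : SymmGraph V) (H : SymmGraph W) (f : V → W) : Prop :=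
  ∀ {x y : V}, G.adj x y → H.adj (f x) (f y)

/-- The type of graph homomorphisms. -/
def GHom (G : SymmGraph V) (H : SymmGraph W) := {f : V → W // IsGraphHom G H f}

def GHom.id (G : SymmGraph V) : GHom G G := ⟨fun x => x, fun h => h⟩

def GHom.comp {G : SymmGraph V} {H : SymmGraph W} {K : SymmGraph U}
    (g : GHom H K) (f : GHom G H) : GHom G K :=
  ⟨fun x => g.1 (f.1 x), fun h => g.2 (f.2 h)⟩

/-- `η` is a multi-homomorphism from `G` to `H`. -/
def IsMultiHom (G : SymmGraph V) (H : SymmGraph W) (η : V → Set W) : Prop :=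
  (∀ x, (η x).Nonempty) ∧
    ∀ {x y}, G.adj x y → ∀ a ∈ η x, ∀ b ∈ η y, H.adj a b

/-- The Hom complex `Hom(G,H)`: the poset of multi-homomorphisms. -/
def MultiHom (G : SymmGraph V) (H : SymmGraph W) := {η : V → Set W // IsMultiHom G H η}

instance (G : SymmGraph V) (H : SymmGraph W) : PartialOrder (MultiHom G H) :=
  Subtype.partialOrder _

/-- A graph homomorphism regarded as a multi-homomorphism (pointwise singletons). -/
def GHom.toMulti {G : SymmGraph V} {H : SymmGraph W} (f : GHom G H) : MultiHom G H :=
  ⟨fun x => {f.1 x}, fun x => ⟨f.1 x, rfl⟩, by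
    intro x y h a ha b hb
    rw [Set.mem_singleton_iff] at ha hb
    subst ha; subst hb
    exact f.2 h⟩

/-- Two homomorphisms are ×-homotopic iff they lie in the same connected
component of the poset `Hom(G,H)`. -/
def XHomotopic {G : SymmGraph V} {H : SymmGraph W} (f g : GHom G H) : Prop :=
  Relation.ReflTransGen (fun η η' : MultiHom G H => η ≤ η' ∨ η' ≤ η)
    f.toMulti g.toMulti

theorem IsMultiHom.disjoint_of_adj {T : SymmGraph V} {G : SymmGraph W} {η : V → Set W}
    (hη : IsMultiHom T G η) (hsimple : ∀ a : W, ¬ G.adj a a) {x y : V} (hxy : T.adj x y) :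
    Disjoint (η x) (η y) :=
  Set.disjoint_left.2 fun a hax hay => hsimple a (hη.2 hxy a hax a hay)

theorem IsMultiHom.apply_ne_of_adj {T : SymmGraph V} {G : SymmGraph W} {η : V → Set W}
    (hη : IsMultiHom T G η) (hsimple : ∀ a : W, ¬ G.adj a a) {x y : V} (hxy : T.adj x y) :
    η x ≠ η y := by
  intro hEq
  obtain ⟨a, ha⟩ := hη.1 x
  exact Set.disjoint_left.1 (hη.disjoint_of_adj hsimple hxy) ha (hEq ▸ ha)

theorem stmt_10_general (T : SymmGraph V) (G : SymmGraph W) (α : V → V)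
    (hflip : ∃ x, T.adj x (α x))
    (hsimple : ∀ a : W, ¬ G.adj a a)
    (η : MultiHom T G) :
    ¬ (fun x => η.1 (α x)) = η.1 := by
  intro hfix
  obtain ⟨x, hx⟩ := hflip
  exact η.2.apply_ne_of_adj hsimple hx (congrFun hfix x).symm

/-- Let `T` be a flipping `ℤ/2`-graph: `α` is a graph-homomorphism involution
of `T` with `(x, α x)` an edge for some vertex `x`. If `G` is simple (no
loops), then the induced `ℤ/2`-action `η ↦ η ∘ α` on the poset `Hom(T,G)` is
free: no multi-homomorphism is fixed. -/
theorem stmt_10 (T : SymmGraph V) (G : SymmGraph W) (α : V → V)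
    (hα : IsGraphHom T T α) (hinv : α ∘ α = id)
    (hflip : ∃ x, T.adj x (α x))
    (hsimple : ∀ a : W, ¬ G.adj a a)
    (η : MultiHom T G) :
    ¬ (fun x => η.1 (α x)) = η.1 :=
  stmt_10_general T G α hflip hsimple η
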